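/- arXiv:math/0006055 — 2 statements merged into one kernel-verified Lean document; each statement's English description precedes it below -/
import Mathlib

section
/- Let ℓ_n : J_n → Z/2Z be the length homomorphism with ℓ_n(α_T) = 1 + |T| mod 2, and let PJ_n = ker(φ : J_n → Σ_n). Then the restriction of ℓ_n to PJ_n is nontrivial for n ≥ 4: the pure quasi-braid p = α_{(1,2)} α_{(2,3)} α_{(1,2)} α_{(1,2,3)} lies in PJ_4 and satisfies ℓ_4(p) = 1. -/
/-- Generators of the quasi-braid group `J_n`: intervals `{p.1,...,p.2}` (0-indexed)
of at least two points inside `{0,...,n-1}`, corresponding to the connected subsets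
`{σ_{p.1+1},...,σ_{p.2}}` of the Coxeter generators of `Σ_n`. -/
def IntervalGen (n : ℕ) : Type := {p : ℕ × ℕ // p.1 < p.2 ∧ p.2 < n}

/-- The action `j_T T' = ω_T T' ω_T` on subintervals: if `T' = {c,...,d} ⊆ T = {a,...,b}`
then `j_T T' = {a+b-d,...,a+b-c}`; otherwise it is defined to be `T'`. -/
def jmap {n : ℕ} (T T' : IntervalGen n) : IntervalGen n :=
  if h : T.1.1 ≤ T'.1.1 ∧ T'.1.2 ≤ T.1.2 then
    ⟨(T.1.1 + T.1.2 - T'.1.2, T.1.1 + T.1.2 - T'.1.1), by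
      obtain ⟨h1, h2⟩ := T.2; obtain ⟨h3, h4⟩ := T'.2; constructor <;> omega⟩
  else T'

/-- The defining relations of the quasi-braid group `J_n`:
`α_T² = 1`; `α_T α_{T'} = α_{j_T T'} α_T` for `T' ⊆ T`; and `α_T α_{T'} = α_{T'} α_T`
when the intervals `T` and `T'` are disjoint and non-adjacent. -/
def QBRels (n : ℕ) : Set (FreeGroup (IntervalGen n)) :=
  {w | (∃ T : IntervalGen n, w = FreeGroup.of T * FreeGroup.of T) ∨
    (∃ T T' : IntervalGen n, T.1.1 ≤ T'.1.1 ∧ T'.1.2 ≤ T.1.2 ∧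
      w = FreeGroup.of T * FreeGroup.of T' * (FreeGroup.of (jmap T T'))⁻¹ *
        (FreeGroup.of T)⁻¹) ∨
    (∃ T T' : IntervalGen n, T.1.2 + 1 < T'.1.1 ∧
      w = FreeGroup.of T * FreeGroup.of T' * (FreeGroup.of T)⁻¹ * (FreeGroup.of T')⁻¹)}

/-- The quasi-braid group `J_n`, presented by generators `α_T` and the quasi-braid
relations. -/
abbrev J (n : ℕ) : Type := PresentedGroup (QBRels n)


/-- The underlying map of the reversal of the (0-indexed) interval `{a,...,b}` in `Fin n`. -/
def revFun (n a b : ℕ) (k : Fin n) : Fin n :=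
  if h : a ≤ (k : ℕ) ∧ (k : ℕ) ≤ b ∧ b < n then ⟨a + b - (k : ℕ), by omega⟩ else k

lemma revFun_involutive (n a b : ℕ) : Function.Involutive (revFun n a b) := by
  intro k
  unfold revFun
  by_cases h : a ≤ (k : ℕ) ∧ (k : ℕ) ≤ b ∧ b < n
  · rw [dif_pos h, dif_pos (by simp; omega)]
    ext
    simp
    omega
  · rw [dif_neg h, dif_neg h]

/-- The reversal permutation `ω_{(a,...,b)}` of the interval `{a,...,b}` in `Σ_n`:
the longest element of the parabolic subgroup generated by the corresponding
Coxeter generators. -/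
def revPerm (n a b : ℕ) : Equiv.Perm (Fin n) :=
  Function.Involutive.toPerm (revFun n a b) (revFun_involutive n a b)

theorem revPerm_apply_val (n a b : ℕ) (k : Fin n) :
    (revPerm n a b k : ℕ) = if a ≤ (k : ℕ) ∧ (k : ℕ) ≤ b ∧ b < n then a + b - k else k := by
  simp only [revPerm, Function.Involutive.coe_toPerm, revFun]
  split_ifs <;> rfl

theorem revPerm_mul_self (n a b : ℕ) : revPerm n a b * revPerm n a b = 1 :=
  Equiv.ext (revFun_involutive n a b)

theorem revPerm_braid (n a : ℕ) :
    revPerm n a (a + 1) * revPerm n (a + 1) (a + 2) * revPerm n a (a + 1) =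
      revPerm n a (a + 2) := by
  ext k
  simp only [Equiv.Perm.coe_mul, Function.comp_apply, revPerm_apply_val]
  split_ifs <;> omega

/-- the restriction of the length homomorphism `ℓ_4 : J_4 → ℤ/2ℤ`
(with `ℓ_4(α_T) = 1 + |T|`, `|T|` the number of Coxeter generators of the interval `T`)
to the pure quasi-braid group `PJ_4 = ker(φ : J_4 → Σ_4)` is nontrivial: the element
`p = α_{(1,2)} α_{(2,3)} α_{(1,2)} α_{(1,2,3)}` (0-indexed intervals
`(0,1), (1,2), (0,1), (0,2)`) lies in `ker φ` and satisfies `ℓ_4(p) = 1`. -/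
theorem length_nontrivial_on_pure_quasi_braids
    (φ : J 4 →* Equiv.Perm (Fin 4))
    (hφ : ∀ T : IntervalGen 4, φ (PresentedGroup.of T) = revPerm 4 T.1.1 T.1.2)
    (ℓ : J 4 →* Multiplicative (ZMod 2))
    (hℓ : ∀ T : IntervalGen 4, ℓ (PresentedGroup.of T) =
      Multiplicative.ofAdd (1 + ((T.1.2 - T.1.1 : ℕ) : ZMod 2)))
    (p : J 4)
    (hp : p = PresentedGroup.of ⟨(0, 1), by omega⟩ * PresentedGroup.of ⟨(1, 2), by omega⟩ *
      PresentedGroup.of ⟨(0, 1), by omega⟩ * PresentedGroup.of ⟨(0, 2), by omega⟩) :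
    φ p = 1 ∧ ℓ p = Multiplicative.ofAdd 1 := by
  subst hp
  constructor
  · simp only [map_mul, hφ ⟨(0, 1), _⟩, hφ ⟨(1, 2), _⟩, hφ ⟨(0, 2), _⟩]
    exact (congrArg (· * _) (revPerm_braid 4 0)).trans (revPerm_mul_self 4 0 2)
  · simp only [map_mul, hℓ ⟨(0, 1), _⟩, hℓ ⟨(1, 2), _⟩, hℓ ⟨(0, 2), _⟩]
    -- each transposition contributes `1 + 1 = 0`, the reversal of `{0, 1, 2}` contributes `1 + 2 = 1`
    decide
end

section
/- The number of connected components of M_{0,n+1}(R) = ((RP¹)^{n+1} \ Δ)/PGL(2,R), equivalently of the complement of the projectivized braid arrangement in RP^{n-2}, is n!/2 for n ≥ 3: the projective Weyl chambers W^σ and W^{σω} coincide, where ω is the order-reversing permutation, and W^σ = W^τ in RP^{n-2} implies τ ∈ {σ, σω}. -/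
open Equiv

lemma revPerm_zero_sub_one (n : ℕ) : revPerm n 0 (n - 1) = Fin.revPerm := by
  ext k
  have hk := k.isLt
  simp only [revPerm, revFun, Function.Involutive.coe_toPerm, Fin.revPerm_apply, Fin.val_rev]
  rw [dif_pos (by omega)]
  simp only [zero_add]
  omega

lemma Fin.revPerm_mul_revPerm {n : ℕ} : (Fin.revPerm : Perm (Fin n)) * Fin.revPerm = 1 :=
  Perm.ext Fin.rev_rev

lemma Fin.revPerm_ne_one {n : ℕ} (hn : 2 ≤ n) : (Fin.revPerm : Perm (Fin n)) ≠ 1 := by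
  intro h
  have h0 := congrArg Fin.val (Perm.ext_iff.mp h ⟨0, by omega⟩)
  simp only [Fin.revPerm_apply, Fin.val_rev, Perm.one_apply] at h0
  omega

lemma Fin.orderOf_revPerm {n : ℕ} (hn : 2 ≤ n) : orderOf (Fin.revPerm : Perm (Fin n)) = 2 :=
  orderOf_eq_prime (sq Fin.revPerm ▸ Fin.revPerm_mul_revPerm) (Fin.revPerm_ne_one hn)

lemma mem_zpowers_iff_of_orderOf_eq_two {G : Type*} [Group G] {w x : G} (hw : orderOf w = 2) :
    x ∈ Subgroup.zpowers w ↔ x = 1 ∨ x = w := by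
  classical
  rw [(orderOf_pos_iff.mp (by omega)).mem_zpowers_iff_mem_range_orderOf, hw]
  simp only [Finset.mem_image, Finset.mem_range, Nat.lt_succ_iff, Nat.le_one_iff_eq_zero_or_eq_one,
    or_and_right, exists_or, exists_eq_left, pow_zero, pow_one]
  exact or_congr eq_comm eq_comm

lemma Subgroup.card_range_eq_index {G β : Type*} [Group G] (H : Subgroup G) (f : G → β)
    (hf : ∀ a b, f a = f b ↔ a⁻¹ * b ∈ H) : Nat.card (Set.range f) = H.index :=
  Nat.card_congr <| (Setoid.quotientKerEquivRange f).symm.trans <|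
    Quotient.congrRight fun a b => (hf a b).trans QuotientGroup.leftRel_apply.symm

lemma card_range_mul_two_of_eq_iff {G β : Type*} [Group G] {f : G → β} {w : G}
    (hw : orderOf w = 2) (hf : ∀ a b, f a = f b ↔ b = a ∨ b = a * w) :
    Nat.card (Set.range f) * 2 = Nat.card G := by
  have hindex := (Subgroup.zpowers w).card_range_eq_index f fun a b => by
    rw [hf, mem_zpowers_iff_of_orderOf_eq_two hw, inv_mul_eq_one, inv_mul_eq_iff_eq_mul, eq_comm]
  rw [hindex, ← hw, ← Nat.card_zpowers, Subgroup.index_mul_card]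

section WeylChamber

variable (R : Type*) {n : ℕ}

def weylChamber [AddCommMonoid R] [Preorder R] (σ : Perm (Fin n)) : Set (Fin n → R) :=
  {a | ∑ i, a i = 0 ∧ StrictMono fun i => a (σ i)}

def projWeylChamber [AddCommGroup R] [Preorder R] (σ : Perm (Fin n)) : Set (Fin n → R) :=
  weylChamber R σ ∪ (fun a => -a) '' weylChamber R σ

variable {R}

lemma image_neg_weylChamber [AddCommGroup R] [PartialOrder R] [IsOrderedAddMonoid R]
    (σ : Perm (Fin n)) :
    (fun a => -a) '' weylChamber R σ = weylChamber R (σ * Fin.revPerm) := by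
  rw [Set.image_neg_eq_neg]
  ext a
  simp only [Set.mem_neg, weylChamber, Set.mem_ofPred_eq, Pi.neg_apply, Finset.sum_neg_distrib,
    neg_eq_zero, Perm.mul_apply, Fin.revPerm_apply]
  refine and_congr_right fun _ => ?_
  set f : Fin n → R := fun i => a (σ i)
  have hrev : StrictMono (fun i => f (Fin.rev i)) ↔ StrictAnti f :=
    ⟨fun h => by simpa [Function.comp_def] using h.comp_strictAnti Fin.rev_strictAnti,
      fun h => h.comp Fin.rev_strictAnti⟩
  have hneg : StrictMono (fun i => -f i) ↔ StrictAnti f :=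
    ⟨fun h => by simpa using h.neg, StrictAnti.neg⟩
  exact hneg.trans hrev.symm

lemma weylChamber_nonempty [Ring R] [LinearOrder R] [IsStrictOrderedRing R] (σ : Perm (Fin n)) :
    (weylChamber R σ).Nonempty := by
  -- `k - rev k = 2k - (n - 1)` is increasing in `k` and sums to zero because `rev` is a bijection.
  refine ⟨fun i => ((σ.symm i : ℕ) : R) - (Fin.rev (σ.symm i) : ℕ), ?_, ?_⟩
  · rw [Equiv.sum_comp σ.symm (fun k : Fin n => ((k : ℕ) : R) - (Fin.rev k : ℕ)),
      Finset.sum_sub_distrib, sub_eq_zero]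
    exact Fintype.sum_equiv Fin.revPerm _ _ fun _ => by simp
  · intro i j hij
    have h1 : ((i : ℕ) : R) < (j : ℕ) := by exact_mod_cast hij
    have h2 : ((Fin.rev j : ℕ) : R) < (Fin.rev i : ℕ) := by exact_mod_cast Fin.rev_lt_rev.mpr hij
    simp only [Equiv.symm_apply_apply]
    exact sub_lt_sub h1 h2

lemma eq_of_mem_weylChamber [AddCommMonoid R] [LinearOrder R] {σ τ : Perm (Fin n)}
    {a : Fin n → R} (hσ : a ∈ weylChamber R σ) (hτ : a ∈ weylChamber R τ) : σ = τ := by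
  have ha : Function.Injective a := (Equiv.injective_comp σ a).mp hσ.2.injective
  have hrange : Set.range (a ∘ σ) = Set.range (a ∘ τ) := by
    rw [Set.range_comp, Set.range_comp, σ.range_eq_univ, τ.range_eq_univ]
  exact Equiv.ext <| congrFun <| ha.comp_left <| hσ.2.range_inj hτ.2 |>.mp hrange

lemma projWeylChamber_eq_union [AddCommGroup R] [PartialOrder R] [IsOrderedAddMonoid R]
    (σ : Perm (Fin n)) :
    projWeylChamber R σ = weylChamber R σ ∪ weylChamber R (σ * Fin.revPerm) := by
  rw [projWeylChamber, image_neg_weylChamber]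

lemma projWeylChamber_eq_iff [Ring R] [LinearOrder R] [IsStrictOrderedRing R]
    {σ τ : Perm (Fin n)} :
    projWeylChamber R σ = projWeylChamber R τ ↔ τ = σ ∨ τ = σ * Fin.revPerm := by
  simp only [projWeylChamber_eq_union]
  constructor
  · intro h
    obtain ⟨a, ha⟩ := weylChamber_nonempty (R := R) σ
    have hmem : a ∈ weylChamber R τ ∪ weylChamber R (τ * Fin.revPerm) :=
      h ▸ Set.mem_union_left _ ha
    rcases hmem with hτ | hτ
    · exact Or.inl (eq_of_mem_weylChamber hτ ha)
    · rw [← eq_of_mem_weylChamber hτ ha, mul_assoc, Fin.revPerm_mul_revPerm, mul_one]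
      exact Or.inr rfl
  · rintro (rfl | rfl)
    · rfl
    · rw [mul_assoc, Fin.revPerm_mul_revPerm, mul_one, Set.union_comm]

end WeylChamber

/-- the moduli space `M_{0,n+1}(ℝ)`, i.e. the complement of the
projectivized braid arrangement in `ℝP^{n-2}`, has `n!/2` connected components for
`n ≥ 3`: in projective space the Weyl chambers `W^σ` and `W^{σω}` coincide (`ω` the
order-reversing permutation), and this is the only identification.  We model the
projective chamber of `σ` as `PW σ = W σ ∪ (-W σ)` where `W σ` is the affine cone
`{a : Σ aᵢ = 0, a_{σ(1)} < ⋯ < a_{σ(n)}}`: then `PW σ = PW τ ↔ τ ∈ {σ, σω}`, and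
there are exactly `n!/2` distinct projective chambers. -/
theorem projective_weyl_chambers (n : ℕ) (hn : 3 ≤ n)
    (W : Equiv.Perm (Fin n) → Set (Fin n → ℝ))
    (hW : ∀ σ, W σ = {a | (∑ i, a i = 0) ∧ StrictMono fun i => a (σ i)})
    (PW : Equiv.Perm (Fin n) → Set (Fin n → ℝ))
    (hPW : ∀ σ, PW σ = W σ ∪ (fun a => -a) '' W σ) :
    (∀ σ τ, PW σ = PW τ ↔ τ = σ ∨ τ = σ * revPerm n 0 (n - 1)) ∧
    Nat.card (Set.range PW) = n.factorial / 2 := by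
  obtain rfl : PW = projWeylChamber ℝ := funext fun σ => by rw [hPW, hW]; rfl
  rw [revPerm_zero_sub_one]
  refine ⟨fun _ _ => projWeylChamber_eq_iff, ?_⟩
  have hcard := card_range_mul_two_of_eq_iff (Fin.orderOf_revPerm (n := n) (by omega))
    fun σ τ => projWeylChamber_eq_iff (R := ℝ) (σ := σ) (τ := τ)
  rw [Nat.card_perm, Nat.card_fin] at hcard
  omega
end
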